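/- arXiv:2308.15347 — 5 statements merged into one kernel-verified Lean document; each statement's English description precedes it below -/
import Mathlib

section
/- Let y, η > 0, σ > 0, τ ≥ 0, f ≥ 0 with f(1+σ) < 1, and let W_a0 > 0, W_u0 > τ/(1−σf). Set q1 = 1 + fη/y and q2 = 1 + η/y − σfη/y. Suppose a, u : ℕ → ℝ are sequences (the adversary and user total wealths at the end of each epoch) satisfying, for every e: 0 ≤ a(e) ≤ W_a0·q1^e and u(e) ≥ W_u0·q2^e − (τη/y)·(q2^e − 1)/(q2 − 1). Then the fraction of user transactions front run in epoch e, namely ⌊a(e)/y⌋ / ⌈(u(e) − τ)/y⌉ (floors and ceilings taken as integers, coerced to ℝ), tends to 0 as e → ∞. -/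
/-!
The adversary's wealth grows at most like `q1 ^ e`, while the user's wealth minus the
threshold `τ` grows at least like `(W_u0 - τ / (1 - σ f)) * q2 ^ e`: the subtracted geometric
series sums to `τ / (1 - σ f) * (q2 ^ e - 1)` because `q2 - 1 = (η / y) (1 - σ f)`.
Since `f (1 + σ) < 1` forces `q1 < q2`, the ratio is squeezed by a multiple of `(q1 / q2) ^ e`.
-/

open Filter

theorem tendsto_div_zero_of_geometric_bounds {N D : ℕ → ℝ} {A B r s : ℝ}
    (hB : 0 < B) (hr : 0 ≤ r) (hrs : r < s)
    (hN : ∀ n, 0 ≤ N n ∧ N n ≤ A * r ^ n) (hD : ∀ n, B * s ^ n ≤ D n) :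
    Tendsto (fun n => N n / D n) atTop (nhds 0) := by
  have hs : 0 < s := hr.trans_lt hrs
  have hlim : Tendsto (fun n : ℕ => A / B * (r / s) ^ n) atTop (nhds 0) := by
    simpa using (tendsto_pow_atTop_nhds_zero_of_lt_one (by positivity)
      ((div_lt_one hs).mpr hrs)).const_mul (A / B)
  refine tendsto_of_tendsto_of_tendsto_of_le_of_le tendsto_const_nhds hlim
    (fun n => ?_) fun n => ?_
  · exact div_nonneg (hN n).1 ((by positivity : 0 ≤ B * s ^ n).trans (hD n))
  · calc N n / D n ≤ A * r ^ n / (B * s ^ n) :=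
          div_le_div₀ ((hN n).1.trans (hN n).2) (hN n).2 (by positivity) (hD n)
      _ = A / B * (r / s) ^ n := by rw [div_pow]; field_simp

theorem sub_ge_geometric_of_ge_sub_geometric_sum {W τ d k q x : ℝ} (n : ℕ)
    (hτ : 0 ≤ τ) (hd : d ≠ 0) (hk : 0 < k) (hk1 : k ≤ 1) (hq : q = 1 + d * k)
    (hx : W * q ^ n - τ * d * (q ^ n - 1) / (q - 1) ≤ x) :
    (W - τ / k) * q ^ n ≤ x - τ := by
  have hsum : τ * d * (q ^ n - 1) / (q - 1) = τ / k * (q ^ n - 1) := by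
    rw [hq]; field_simp; ring
  have hτk : τ ≤ τ / k := by rw [le_div_iff₀ hk]; nlinarith
  linarith

theorem stmt0_general
    (y η σ τ f W_a0 W_u0 : ℝ)
    (hy : 0 < y) (hη : 0 < η) (hσ : 0 < σ) (hτ : 0 ≤ τ) (hf : 0 ≤ f)
    (hfσ : f * (1 + σ) < 1)
    (hWu : W_u0 > τ / (1 - σ * f))
    (q1 q2 : ℝ) (hq1 : q1 = 1 + f * η / y) (hq2 : q2 = 1 + η / y - σ * f * η / y)
    (a u : ℕ → ℝ)
    (ha : ∀ e, 0 ≤ a e ∧ a e ≤ W_a0 * q1 ^ e)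
    (hu : ∀ e, u e ≥ W_u0 * q2 ^ e - (τ * η / y) * (q2 ^ e - 1) / (q2 - 1)) :
    Tendsto (fun e : ℕ => ((⌊a e / y⌋ : ℤ) : ℝ) / ((⌈(u e - τ) / y⌉ : ℤ) : ℝ))
      atTop (nhds 0) := by
  have hσf : 0 ≤ σ * f := by positivity
  have hq1_nonneg : 0 ≤ q1 := by rw [hq1]; positivity
  have hq12 : q1 < q2 := by
    have hgap : q2 - q1 = η / y * (1 - f * (1 + σ)) := by rw [hq1, hq2]; ring
    linarith [mul_pos (div_pos hη hy) (sub_pos.mpr hfσ)]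
  refine tendsto_div_zero_of_geometric_bounds (A := W_a0 / y)
    (B := (W_u0 - τ / (1 - σ * f)) / y) (div_pos (sub_pos.mpr hWu) hy) hq1_nonneg hq12
    (fun e => ⟨?_, ?_⟩) fun e => ?_
  · exact_mod_cast Int.floor_nonneg.mpr (div_nonneg (ha e).1 hy.le)
  · calc (⌊a e / y⌋ : ℝ) ≤ a e / y := Int.floor_le _
      _ ≤ W_a0 * q1 ^ e / y := div_le_div_of_nonneg_right (ha e).2 hy.le
      _ = W_a0 / y * q1 ^ e := by ring
  · have hexcess := sub_ge_geometric_of_ge_sub_geometric_sum (k := 1 - σ * f) (q := q2) e hτ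
      (div_pos hη hy).ne' (by linarith) (by linarith) (by rw [hq2]; ring)
      (by simpa only [mul_div_assoc] using hu e)
    calc (W_u0 - τ / (1 - σ * f)) / y * q2 ^ e
        = (W_u0 - τ / (1 - σ * f)) * q2 ^ e / y := by ring
      _ ≤ (u e - τ) / y := div_le_div_of_nonneg_right hexcess hy.le
      _ ≤ ⌈(u e - τ) / y⌉ := Int.le_ceil _

theorem stmt0
    (y η σ τ f W_a0 W_u0 : ℝ)
    (hy : 0 < y) (hη : 0 < η) (hσ : 0 < σ) (hτ : 0 ≤ τ) (hf : 0 ≤ f)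
    (hfσ : f * (1 + σ) < 1)
    (hWa : 0 < W_a0) (hWu : W_u0 > τ / (1 - σ * f))
    (q1 q2 : ℝ) (hq1 : q1 = 1 + f * η / y) (hq2 : q2 = 1 + η / y - σ * f * η / y)
    (a u : ℕ → ℝ)
    (ha : ∀ e, 0 ≤ a e ∧ a e ≤ W_a0 * q1 ^ e)
    (hu : ∀ e, u e ≥ W_u0 * q2 ^ e - (τ * η / y) * (q2 ^ e - 1) / (q2 - 1)) :
    Tendsto (fun e : ℕ => ((⌊a e / y⌋ : ℤ) : ℝ) / ((⌈(u e - τ) / y⌉ : ℤ) : ℝ))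
      atTop (nhds 0) :=
  stmt0_general y η σ τ f W_a0 W_u0 hy hη hσ hτ hf hfσ hWu q1 q2 hq1 hq2 a u ha hu
end

section
/- Let y, η > 0, σ > 0, τ ≥ 0, f ≥ 0 with f(1+σ) < 1, W_a0 > 0 and W_u0 > τ/(1−σf). Set q1 = 1 + fη/y and q2 = 1 + η/y − σfη/y. Then the sequence e ↦ (W_a0·q1^e) / (W_u0·q2^e − (τη/y)·(q2^e − 1)/(q2 − 1) − τ) tends to 0 as e → ∞. -/
/-!
Summing the geometric series turns the user's wealth into `A * q2 ^ e + C` with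
`A = W_u0 - τ / (1 - σ f) > 0`. Dividing numerator and denominator by `q2 ^ e`, the ratio is
`W_a0 * (q1 / q2) ^ e / (A + C * q2⁻¹ ^ e)`, which tends to `0 / A` because `0 < q1 < q2` and `1 < q2`.
-/

open Filter Topology

lemma mul_pow_sub_geom_sub {q : ℝ} (hq : q ≠ 1) (W r c : ℝ) (e : ℕ) :
    W * q ^ e - r * (q ^ e - 1) / (q - 1) - c = (W - r / (q - 1)) * q ^ e + (r / (q - 1) - c) := by
  have : q - 1 ≠ 0 := sub_ne_zero.2 hq
  field_simp
  ring

lemma tendsto_mul_pow_div_mul_pow_add_nhds_zero {a b A : ℝ} (hb : 1 < b) (hab : |a| < b)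
    (hA : A ≠ 0) (K C : ℝ) :
    Tendsto (fun e : ℕ => K * a ^ e / (A * b ^ e + C)) atTop (𝓝 0) := by
  have hb0 : 0 < b := zero_lt_one.trans hb
  have hnum : Tendsto (fun e : ℕ => K * (a / b) ^ e) atTop (𝓝 (K * 0)) := by
    refine (tendsto_pow_atTop_nhds_zero_of_abs_lt_one ?_).const_mul K
    rwa [abs_div, abs_of_pos hb0, div_lt_one hb0]
  have hden : Tendsto (fun e : ℕ => A + C * b⁻¹ ^ e) atTop (𝓝 (A + C * 0)) :=
    ((tendsto_pow_atTop_nhds_zero_of_lt_one (inv_nonneg.2 hb0.le)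
      (inv_lt_one_of_one_lt₀ hb)).const_mul C).const_add A
  have hlim := hnum.div hden (by simpa using hA)
  rw [mul_zero, zero_div] at hlim
  refine hlim.congr fun e => ?_
  have : b ^ e ≠ 0 := pow_ne_zero e hb0.ne'
  simp only [Pi.div_apply, div_pow, inv_pow]
  rw [← mul_div_mul_right _ _ this]
  congr 1 <;> field_simp

theorem stmt1_general
    (y η σ τ f W_a0 W_u0 : ℝ)
    (hy : 0 < y) (hη : 0 < η) (hf : 0 ≤ f)
    (hfσ : f * (1 + σ) < 1)
    (hWu : W_u0 > τ / (1 - σ * f))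
    (q1 q2 : ℝ) (hq1 : q1 = 1 + f * η / y) (hq2 : q2 = 1 + η / y - σ * f * η / y) :
    Tendsto
      (fun e : ℕ =>
        (W_a0 * q1 ^ e) /
          (W_u0 * q2 ^ e - (τ * η / y) * (q2 ^ e - 1) / (q2 - 1) - τ))
      atTop (nhds 0) := by
  have hηy : 0 < η / y := div_pos hη hy
  have hσf : 0 < 1 - σ * f := by nlinarith
  have hq2_sub_one : q2 - 1 = η / y * (1 - σ * f) := by rw [hq2]; ring
  have hq2_gt_one : 1 < q2 := by nlinarith
  have hq1_lt_q2 : |q1| < q2 := by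
    have hq1_nonneg : 0 ≤ q1 := by rw [hq1]; positivity
    have : q2 - q1 = η / y * (1 - f * (1 + σ)) := by rw [hq1, hq2]; ring
    rw [abs_of_nonneg hq1_nonneg]
    nlinarith
  have hratio : τ * η / y / (q2 - 1) = τ / (1 - σ * f) := by
    rw [hq2_sub_one]
    field_simp
  simp_rw [mul_pow_sub_geom_sub hq2_gt_one.ne', hratio]
  exact tendsto_mul_pow_div_mul_pow_add_nhds_zero hq2_gt_one hq1_lt_q2
    (sub_pos.2 hWu).ne' _ _

theorem stmt1
    (y η σ τ f W_a0 W_u0 : ℝ)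
    (hy : 0 < y) (hη : 0 < η) (hσ : 0 < σ) (hτ : 0 ≤ τ) (hf : 0 ≤ f)
    (hfσ : f * (1 + σ) < 1)
    (hWa : 0 < W_a0) (hWu : W_u0 > τ / (1 - σ * f))
    (q1 q2 : ℝ) (hq1 : q1 = 1 + f * η / y) (hq2 : q2 = 1 + η / y - σ * f * η / y) :
    Tendsto
      (fun e : ℕ =>
        (W_a0 * q1 ^ e) /
          (W_u0 * q2 ^ e - (τ * η / y) * (q2 ^ e - 1) / (q2 - 1) - τ))
      atTop (nhds 0) :=
  stmt1_general y η σ τ f W_a0 W_u0 hy hη hf hfσ hWu q1 q2 hq1 hq2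
end

section
/- Let y, η > 0, σ > 0, ε > 0 with σ + ε < 1, let 0 ≤ f < (1−σ−ε)/(1+σ), let 0 ≤ τ ≤ ε·W_u, and let W_a, W_u be reals with y < W_a and W_a < σ·W_u. Then (W_a + ⌊W_a/y⌋·f·η) / (W_u + ⌊W_a/y⌋·(1−f)·η + (⌈(W_u−τ)/y⌉ − ⌊W_a/y⌋)·η) < σ, where ⌊·⌋ and ⌈·⌉ denote the floor and ceiling of a real number (as integers, coerced back to ℝ). In particular the denominator is positive. -/
/-!
Write `a = ⌊W_a / y⌋` and `b = ⌈(W_u - τ) / y⌉`. The numerator is `N = W_a + a f η` and the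
denominator is `D = W_u + b η - a f η`, so the claim `N < σ D` reduces, after cancelling `W_a < σ W_u`, to `a f (1 + σ) ≤ σ b`. This follows from
`a y ≤ W_a < σ W_u`, `f (1 + σ) < 1 - σ - ε ≤ 1 - ε` and `(1 - ε) W_u ≤ W_u - τ ≤ b y`.
Positivity of the denominator then comes for free from `0 < N < σ D`.
-/

lemma Int.floor_div_mul_le {x y : ℝ} (hy : 0 < y) : (⌊x / y⌋ : ℝ) * y ≤ x :=
  (le_div_iff₀ hy).mp (Int.floor_le _)

lemma Int.le_ceil_div_mul {x y : ℝ} (hy : 0 < y) : x ≤ (⌈x / y⌉ : ℝ) * y :=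
  (div_le_iff₀ hy).mp (Int.le_ceil _)

lemma pos_and_div_lt_of_lt_mul {K : Type*} [Field K] [LinearOrder K] [IsStrictOrderedRing K]
    {n d σ : K} (hn : 0 < n) (hσ : 0 < σ) (h : n < σ * d) : 0 < d ∧ n / d < σ := by
  have hd : 0 < d := pos_of_mul_pos_right (hn.trans h) hσ.le
  exact ⟨hd, (div_lt_iff₀ hd).mpr h⟩

section Epoch

variable {y η σ ε f τ W_a W_u a b : ℝ}

lemma frontrun_count_mul_le (hy : 0 < y) (hσ : 0 < σ) (hf0 : 0 ≤ f)
    (hf : f * (1 + σ) < 1 - σ - ε) (hτ : τ ≤ ε * W_u) (hWaWu : W_a < σ * W_u)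
    (ha : 0 ≤ a) (hay : a * y ≤ W_a) (hby : W_u - τ ≤ b * y) :
    a * f * (1 + σ) ≤ σ * b := by
  have hWu : 0 < W_u := pos_of_mul_pos_right ((mul_nonneg ha hy.le).trans_lt
    (hay.trans_lt hWaWu)) hσ.le
  have hg : 0 ≤ f * (1 + σ) := mul_nonneg hf0 (by linarith)
  refine le_of_mul_le_mul_right ?_ hy
  calc a * f * (1 + σ) * y = (a * y) * (f * (1 + σ)) := by ring
    _ ≤ (σ * W_u) * (1 - ε) := mul_le_mul (hay.trans hWaWu.le) (by linarith) hg (by positivity)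
    _ = σ * ((1 - ε) * W_u) := by ring
    _ ≤ σ * b * y := by rw [mul_assoc]; exact mul_le_mul_of_nonneg_left (by linarith) hσ.le

lemma adversary_wealth_lt_mul_user_wealth (hη : 0 < η) (hWaWu : W_a < σ * W_u)
    (hab : a * f * (1 + σ) ≤ σ * b) :
    W_a + a * f * η < σ * (W_u + a * (1 - f) * η + (b - a) * η) := by
  have : (a * f * (1 + σ) - σ * b) * η ≤ 0 := mul_nonpos_of_nonpos_of_nonneg (by linarith) hη.le
  linarith

end Epoch

theorem stmt3_general
    (y η σ ε f τ W_a W_u : ℝ)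
    (hy : 0 < y) (hη : 0 < η) (hσ : 0 < σ)
    (hf0 : 0 ≤ f) (hf : f < (1 - σ - ε) / (1 + σ))
    (hτ : τ ≤ ε * W_u)
    (hWa : y < W_a) (hWaWu : W_a < σ * W_u) :
    0 < W_u + ((⌊W_a / y⌋ : ℤ) : ℝ) * (1 - f) * η +
        (((⌈(W_u - τ) / y⌉ : ℤ) : ℝ) - ((⌊W_a / y⌋ : ℤ) : ℝ)) * η ∧
    (W_a + ((⌊W_a / y⌋ : ℤ) : ℝ) * f * η) /
        (W_u + ((⌊W_a / y⌋ : ℤ) : ℝ) * (1 - f) * η +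
          (((⌈(W_u - τ) / y⌉ : ℤ) : ℝ) - ((⌊W_a / y⌋ : ℤ) : ℝ)) * η) < σ := by
  have hWa0 : 0 < W_a := hy.trans hWa
  have ha : (0 : ℝ) ≤ ⌊W_a / y⌋ := mod_cast Int.floor_nonneg.mpr (by positivity)
  have hf' : f * (1 + σ) < 1 - σ - ε := (lt_div_iff₀ (by linarith)).mp hf
  have hab := frontrun_count_mul_le hy hσ hf0 hf' hτ hWaWu ha
    (Int.floor_div_mul_le hy) (Int.le_ceil_div_mul hy)
  exact pos_and_div_lt_of_lt_mul (by positivity) hσ (adversary_wealth_lt_mul_user_wealth hη hWaWu hab)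

theorem stmt3
    (y η σ ε f τ W_a W_u : ℝ)
    (hy : 0 < y) (hη : 0 < η) (hσ : 0 < σ) (hε : 0 < ε) (hσε : σ + ε < 1)
    (hf0 : 0 ≤ f) (hf : f < (1 - σ - ε) / (1 + σ))
    (hτ0 : 0 ≤ τ) (hτ : τ ≤ ε * W_u)
    (hWa : y < W_a) (hWaWu : W_a < σ * W_u) :
    0 < W_u + ((⌊W_a / y⌋ : ℤ) : ℝ) * (1 - f) * η +
        (((⌈(W_u - τ) / y⌉ : ℤ) : ℝ) - ((⌊W_a / y⌋ : ℤ) : ℝ)) * η ∧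
    (W_a + ((⌊W_a / y⌋ : ℤ) : ℝ) * f * η) /
        (W_u + ((⌊W_a / y⌋ : ℤ) : ℝ) * (1 - f) * η +
          (((⌈(W_u - τ) / y⌉ : ℤ) : ℝ) - ((⌊W_a / y⌋ : ℤ) : ℝ)) * η) < σ :=
  stmt3_general y η σ ε f τ W_a W_u hy hη hσ hf0 hf hτ hWa hWaWu
end

section
/- Let y > 0, W > 0, f ≥ 0, η ≥ 0 and c ≥ 0 be real numbers satisfying y² + W·f·η < c·W·(y+η). Then ⌊⌊W/y⌋·f·η/y⌋ < ⌊c·⌈W/y⌉·(y+η)/y⌋ as integers, where ⌊·⌋ and ⌈·⌉ denote the floor and ceiling of a real number. -/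
/-! With `x = W / y`, `p = f η / y` and `q = c (y + η) / y`, the hypothesis divided by `y²` reads
`x p + 1 < x q`; rounding `x` down on the left and up on the right only widens this gap, which
is larger than the `1` that the outer floors can lose. -/

theorem Int.floor_floor_mul_lt_floor_ceil_mul {α : Type*} [Ring α] [LinearOrder α]
    [IsStrictOrderedRing α] [FloorRing α] {x p q : α} (hp : 0 ≤ p) (hq : 0 ≤ q)
    (h : x * p + 1 < x * q) : ⌊(⌊x⌋ : α) * p⌋ < ⌊(⌈x⌉ : α) * q⌋ := by
  rw [Int.lt_iff_add_one_le, Int.le_floor, Int.cast_add, Int.cast_one]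
  calc (⌊(⌊x⌋ : α) * p⌋ : α) + 1 ≤ ⌊x⌋ * p + 1 := by gcongr; exact Int.floor_le _
    _ ≤ x * p + 1 := by gcongr; exact Int.floor_le x
    _ ≤ x * q := h.le
    _ ≤ ⌈x⌉ * q := by gcongr; exact Int.le_ceil x

theorem stmt4_general
    (y W f η c : ℝ)
    (hy : 0 < y) (hf : 0 ≤ f) (hη : 0 ≤ η) (hc : 0 ≤ c)
    (h : y ^ 2 + W * f * η < c * W * (y + η)) :
    ⌊((⌊W / y⌋ : ℤ) : ℝ) * f * η / y⌋ < ⌊c * ((⌈W / y⌉ : ℤ) : ℝ) * (y + η) / y⌋ := by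
  have hscaled : W / y * (f * η / y) + 1 < W / y * (c * (y + η) / y) := by
    have hgap : W / y * (c * (y + η) / y) - (W / y * (f * η / y) + 1)
        = (c * W * (y + η) - (y ^ 2 + W * f * η)) / y ^ 2 := by
      field_simp
      ring
    rw [← sub_pos, hgap]
    exact div_pos (sub_pos.mpr h) (by positivity)
  convert Int.floor_floor_mul_lt_floor_ceil_mul (by positivity) (by positivity) hscaled
    using 3 <;> ring

theorem stmt4
    (y W f η c : ℝ)
    (hy : 0 < y) (hW : 0 < W) (hf : 0 ≤ f) (hη : 0 ≤ η) (hc : 0 ≤ c)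
    (h : y ^ 2 + W * f * η < c * W * (y + η)) :
    ⌊((⌊W / y⌋ : ℤ) : ℝ) * f * η / y⌋ < ⌊c * ((⌈W / y⌉ : ℤ) : ℝ) * (y + η) / y⌋ :=
  stmt4_general y W f η c hy hf hη hc h
end

section
/- Let W, y, η > 0, f ≥ 0, c ≥ 0 satisfy f·η + y²/W < c·η·(1−f) − c·y²/W, and let W' be a real number with W' ≤ W·(1 + f·η/y). Then c·⌈W'/y⌉ < ⌊c·⌈W/y⌉·(y+η)/y⌋ − ⌊⌊W/y⌋·f·η/y⌋, where ⌊·⌋ and ⌈·⌉ denote the floor and ceiling of a real number (as integers, coerced back to ℝ). -/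
/-! Measured in units of the token cost, with `a = W / y` and `b = η / y`, the hypothesis reads
`f a b + 1 + c f a b + c < c a b`. Rounding costs at most one unit on each side: the left-hand side
is at most `c (a (1 + f b) + 1)`, while the difference of floors exceeds `c a (1 + b) - a f b - 1`,
and the hypothesis is exactly the gap between the two. -/

theorem Int.sub_sub_one_lt_floor_sub_floor (u v : ℝ) :
    u - v - 1 < ((⌊u⌋ - ⌊v⌋ : ℤ) : ℝ) := by
  push_cast
  linarith [Int.sub_one_lt_floor u, Int.floor_le v]

theorem mul_ceil_le_mul_add_one {c : ℝ} (hc : 0 ≤ c) (x : ℝ) : c * ⌈x⌉ ≤ c * (x + 1) :=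
  mul_le_mul_of_nonneg_left (Int.ceil_lt_add_one x).le hc

theorem mul_ceil_lt_floor_sub_floor {a b c f x : ℝ} (hb : 0 ≤ b) (hc : 0 ≤ c) (hf : 0 ≤ f)
    (hgap : f * a * b + 1 + c * (f * a * b) + c < c * a * b) (hx : x ≤ a * (1 + f * b)) :
    c * ⌈x⌉ < ((⌊c * ⌈a⌉ * (1 + b)⌋ - ⌊⌊a⌋ * f * b⌋ : ℤ) : ℝ) :=
  calc c * ⌈x⌉ ≤ c * (x + 1) := mul_ceil_le_mul_add_one hc x
    _ ≤ c * (a * (1 + f * b) + 1) := by gcongr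
    _ < c * a * (1 + b) - a * f * b - 1 := by linarith
    _ ≤ c * ⌈a⌉ * (1 + b) - ⌊a⌋ * f * b - 1 := by
      gcongr
      exacts [Int.le_ceil a, Int.floor_le a]
    _ < _ := Int.sub_sub_one_lt_floor_sub_floor _ _

theorem stmt8
    (W y η f c W' : ℝ)
    (hW : 0 < W) (hy : 0 < y) (hη : 0 < η) (hf : 0 ≤ f) (hc : 0 ≤ c)
    (h : f * η + y ^ 2 / W < c * η * (1 - f) - c * y ^ 2 / W)
    (hW' : W' ≤ W * (1 + f * η / y)) :
    c * ((⌈W' / y⌉ : ℤ) : ℝ) <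
      ((⌊c * ((⌈W / y⌉ : ℤ) : ℝ) * (y + η) / y⌋ : ℤ) : ℝ) -
        ((⌊((⌊W / y⌋ : ℤ) : ℝ) * f * η / y⌋ : ℤ) : ℝ) := by
  have hgap : f * (W / y) * (η / y) + 1 + c * (f * (W / y) * (η / y)) + c
      < c * (W / y) * (η / y) := by
    have h' := mul_lt_mul_of_pos_right h (by positivity : 0 < W / y ^ 2)
    field_simp at h' ⊢
    linarith
  have hx : W' / y ≤ W / y * (1 + f * (η / y)) := by
    rw [div_mul_eq_mul_div, ← mul_div_assoc]
    gcongr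
  have hceil : c * ⌈W / y⌉ * (y + η) / y = c * ⌈W / y⌉ * (1 + η / y) := by
    field_simp
  rw [hceil, mul_div_assoc _ η, ← Int.cast_sub]
  exact mul_ceil_lt_floor_sub_floor (by positivity) hc hf hgap hx
end
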